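/- Every subalgebra h of the parabolic algebra p = (ℝ ⊕ so(n)) ⋉ ℝⁿ that is solvable is 2-step solvable, i.e. its second derived algebra h⁽²⁾ vanishes. -/

import Mathlib

open Matrix

attribute [local instance 100] LieRing.ofAssociativeRing

/-- Index type for `(n+2) × (n+2)` block matrices with blocks of sizes `1, n, 1`. -/
abbrev PIdx (n : ℕ) := Unit ⊕ (Fin n ⊕ Unit)

/-- The element of the parabolic algebra `p = (ℝ ⊕ so(n)) ⋉ ℝⁿ` corresponding to the
triple `(a, A, v)`, realised as the block matrix `[[a, vᵗ, 0], [0, A, v], [0, 0, -a]]`. -/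
def parabolicEmb (n : ℕ) (a : ℝ) (A : Matrix (Fin n) (Fin n) ℝ) (v : Fin n → ℝ) :
    Matrix (PIdx n) (PIdx n) ℝ :=
  Matrix.of fun i j =>
    match i, j with
    | Sum.inl _, Sum.inl _ => a
    | Sum.inl _, Sum.inr (Sum.inl k) => v k
    | Sum.inl _, Sum.inr (Sum.inr _) => 0
    | Sum.inr (Sum.inl _), Sum.inl _ => 0
    | Sum.inr (Sum.inl k), Sum.inr (Sum.inl l) => A k l
    | Sum.inr (Sum.inl k), Sum.inr (Sum.inr _) => v k
    | Sum.inr (Sum.inr _), Sum.inl _ => 0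
    | Sum.inr (Sum.inr _), Sum.inr (Sum.inl _) => 0
    | Sum.inr (Sum.inr _), Sum.inr (Sum.inr _) => -a


/-- The parabolic algebra `p = (ℝ ⊕ so(n)) ⋉ ℝⁿ`, as a set of block matrices. -/
def parabolicSet (n : ℕ) : Set (Matrix (PIdx n) (PIdx n) ℝ) :=
  {M | ∃ (a : ℝ) (A : Matrix (Fin n) (Fin n) ℝ) (v : Fin n → ℝ), Aᵀ = -A ∧ M = parabolicEmb n a A v}

/-!
The so(n)-components of `h` form a solvable subalgebra of so(n). On so(n) the trace form is
invariant and negative definite, so `⁅⁅x, y⁆, x⁆ = 0` forces `⁅x, y⁆ = 0`; descending the derived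
series, a solvable Lie algebra with this property is abelian. By the bracket formula of `p`, the
ℝ- and so(n)-components of `⁅h, h⁆` therefore vanish: `h⁽¹⁾` consists of translations, and
translations commute.
-/

open LieAlgebra LieAlgebra.Orthogonal

theorem LieIdeal.lie_self_eq_bot_of_derived_lie_self_eq_bot {R L : Type*} [CommRing R]
    [LieRing L] [LieAlgebra R L] (hL : ∀ x y : L, ⁅⁅x, y⁆, x⁆ = 0 → ⁅x, y⁆ = 0)
    {I : LieIdeal R L} (hI : ⁅⁅I, I⁆, ⁅I, I⁆⁆ = ⊥) : ⁅I, I⁆ = ⊥ := by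
  have hcentral : ∀ z ∈ ⁅I, I⁆, ∀ x ∈ I, ⁅z, x⁆ = 0 := fun z hz x _ =>
    hL z x <| (LieSubmodule.lie_eq_bot_iff _ _).mp hI _ (lie_mem_left R L _ _ _ hz) z hz
  rw [LieSubmodule.lie_eq_bot_iff]
  exact fun x hx y hy => hL x y (hcentral _ (LieSubmodule.lie_mem_lie hx hy) x hx)

theorem LieAlgebra.isLieAbelian_of_isSolvable_of_lie_lie_eq_zero {R L : Type*} [CommRing R]
    [LieRing L] [LieAlgebra R L] [IsSolvable L]
    (hL : ∀ x y : L, ⁅⁅x, y⁆, x⁆ = 0 → ⁅x, y⁆ = 0) : IsLieAbelian L := by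
  have hdescend : ∀ k, derivedSeries R L (k + 1) = ⊥ → derivedSeries R L 1 = ⊥ := by
    intro k
    induction k with
    | zero => exact id
    | succ k ih =>
      simp only [derivedSeriesOfIdeal_succ] at ih ⊢
      exact fun hk => ih (LieIdeal.lie_self_eq_bot_of_derived_lie_self_eq_bot hL hk)
  obtain ⟨k, hk⟩ := IsSolvable.solvable (R := R) (L := L)
  have hk1 : derivedSeries R L (k + 1) = ⊥ :=
    eq_bot_iff.mpr (hk ▸ derivedSeriesOfIdeal_succ_le _ k)
  rw [lie_abelian_iff_equiv_lie_abelian (LieIdeal.topEquiv (R := R) (L := L)).symm,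
    abelian_iff_derived_one_eq_bot]
  exact hdescend k hk1

theorem Matrix.lie_eq_zero_of_lie_lie_eq_zero {m : Type*} [Fintype m] [DecidableEq m]
    {P Q : Matrix m m ℝ} (hP : P ∈ so m ℝ) (hQ : Q ∈ so m ℝ) (h : ⁅⁅P, Q⁆, P⁆ = 0) :
    ⁅P, Q⁆ = 0 := by
  set V := ⁅P, Q⁆
  have hVskew : Vᵀ = -V := (mem_so _ _ _).mp ((so m ℝ).lie_mem hP hQ)
  have htrace : (V * V).trace = 0 := calc
    (V * V).trace = (V * P * Q).trace - (P * V * Q).trace := by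
      rw [← trace_mul_cycle V Q P, ← trace_sub, mul_assoc, mul_assoc, ← mul_sub, ← Ring.lie_def]
    _ = (⁅V, P⁆ * Q).trace := by rw [Ring.lie_def, sub_mul, trace_sub]
    _ = 0 := by rw [h, zero_mul, trace_zero]
  rw [← trace_mul_conjTranspose_self_eq_zero_iff, conjTranspose_eq_transpose_of_trivial,
    hVskew, mul_neg, trace_neg, htrace, neg_zero]

theorem LieSubalgebra.isLieAbelian_of_le_so {m : Type*} [Fintype m] [DecidableEq m]
    (K : LieSubalgebra ℝ (Matrix m m ℝ)) (hK : K ≤ so m ℝ) [IsSolvable K] : IsLieAbelian K :=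
  isLieAbelian_of_isSolvable_of_lie_lie_eq_zero (R := ℝ) fun x y hxy => Subtype.ext <|
    Matrix.lie_eq_zero_of_lie_lie_eq_zero (hK x.2) (hK y.2) (congrArg Subtype.val hxy)

namespace Parabolic

variable {n : ℕ}

theorem _root_.parabolicEmb_lie {a b : ℝ} {A B : Matrix (Fin n) (Fin n) ℝ} (hA : Aᵀ = -A)
    (hB : Bᵀ = -B) (v w : Fin n → ℝ) :
    ⁅parabolicEmb n a A v, parabolicEmb n b B w⁆ =
      parabolicEmb n 0 ⁅A, B⁆ ((A + a • 1) *ᵥ w - (B + b • 1) *ᵥ v) := by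
  -- the top row `v ᵥ* B - w ᵥ* A + a • w - b • v` of the bracket matches its last column by skewness
  have hskew : ∀ {C : Matrix (Fin n) (Fin n) ℝ}, Cᵀ = -C → ∀ (u : Fin n → ℝ) l,
      ∑ x, u x * C x l = -∑ x, C l x * u x := by
    intro C hC u l
    have hCe : ∀ x, C x l = -C l x := fun x => by simpa using congrFun (congrFun hC l) x
    simp only [hCe, mul_neg, Finset.sum_neg_distrib, mul_comm]
  ext (_ | k | _) (_ | l | _) <;>
    simp [Ring.lie_def, mul_apply, parabolicEmb, Fintype.sum_sum_type, add_mulVec, smul_mulVec,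
      mulVec, dotProduct, hskew hA, hskew hB, mul_comm (w _) (v _)] <;> ring

def soPart (M : Matrix (PIdx n) (PIdx n) ℝ) : Matrix (Fin n) (Fin n) ℝ :=
  M.submatrix (Sum.inr ∘ Sum.inl) (Sum.inr ∘ Sum.inl)

@[simp]
theorem soPart_parabolicEmb (a : ℝ) (A : Matrix (Fin n) (Fin n) ℝ) (v : Fin n → ℝ) :
    soPart (parabolicEmb n a A v) = A :=
  rfl

variable (h : LieSubalgebra ℝ (Matrix (PIdx n) (PIdx n) ℝ))

def soPartHom (hsub : (h : Set (Matrix (PIdx n) (PIdx n) ℝ)) ⊆ parabolicSet n) :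
    h →ₗ⁅ℝ⁆ Matrix (Fin n) (Fin n) ℝ where
  toFun x := soPart x
  map_add' _ _ := rfl
  map_smul' _ _ := rfl
  map_lie' {x y} := by
    obtain ⟨a, A, v, hA, hx⟩ := hsub x.2
    obtain ⟨b, B, w, hB, hy⟩ := hsub y.2
    simp [hx, hy, parabolicEmb_lie hA hB]

@[simp]
theorem soPartHom_apply (hsub : (h : Set (Matrix (PIdx n) (PIdx n) ℝ)) ⊆ parabolicSet n)
    (x : h) : soPartHom h hsub x = soPart x :=
  rfl

theorem soPartHom_range_le_so (hsub : (h : Set (Matrix (PIdx n) (PIdx n) ℝ)) ⊆ parabolicSet n) :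
    (soPartHom h hsub).range ≤ so (Fin n) ℝ := by
  rintro _ ⟨x, rfl⟩
  obtain ⟨a, A, v, hA, hx⟩ := hsub x.2
  simpa [hx] using hA

theorem soPart_lie_soPart [IsSolvable h]
    (hsub : (h : Set (Matrix (PIdx n) (PIdx n) ℝ)) ⊆ parabolicSet n) (x y : h) :
    ⁅soPart (x : Matrix (PIdx n) (PIdx n) ℝ), soPart (y : Matrix (PIdx n) (PIdx n) ℝ)⁆ = 0 := by
  have := (soPartHom h hsub).range.isLieAbelian_of_le_so (soPartHom_range_le_so h hsub)
  simpa using congrArg Subtype.val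
    (trivial_lie_zero _ _ ((soPartHom h hsub).rangeRestrict x) ((soPartHom h hsub).rangeRestrict y))

def translation (n : ℕ) : (Fin n → ℝ) →ₗ[ℝ] Matrix (PIdx n) (PIdx n) ℝ where
  toFun := parabolicEmb n 0 0
  map_add' v w := by ext (_ | _ | _) (_ | _ | _) <;> simp [parabolicEmb]
  map_smul' c v := by ext (_ | _ | _) (_ | _ | _) <;> simp [parabolicEmb]

@[simp]
theorem translation_apply (v : Fin n → ℝ) : translation n v = parabolicEmb n 0 0 v :=
  rfl

theorem translation_lie_translation (v w : Fin n → ℝ) :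
    ⁅translation n v, translation n w⁆ = 0 := by
  have hzero : (0 : Matrix (Fin n) (Fin n) ℝ)ᵀ = -0 := by simp
  calc ⁅translation n v, translation n w⁆ = translation n 0 := by
        simpa using parabolicEmb_lie (a := 0) (b := 0) hzero hzero v w
    _ = 0 := map_zero _

theorem lie_mem_range_translation [IsSolvable h]
    (hsub : (h : Set (Matrix (PIdx n) (PIdx n) ℝ)) ⊆ parabolicSet n) (x y : h) :
    ((⁅x, y⁆ : h) : Matrix (PIdx n) (PIdx n) ℝ) ∈ LinearMap.range (translation n) := by
  have hcomm := soPart_lie_soPart h hsub x y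
  obtain ⟨a, A, v, hA, hx⟩ := hsub x.2
  obtain ⟨b, B, w, hB, hy⟩ := hsub y.2
  rw [hx, hy, soPart_parabolicEmb, soPart_parabolicEmb] at hcomm
  exact ⟨_, by rw [LieSubalgebra.coe_bracket, hx, hy, parabolicEmb_lie hA hB, hcomm]; rfl⟩

theorem mem_range_translation_of_mem_derivedSeries_one [IsSolvable h]
    (hsub : (h : Set (Matrix (PIdx n) (PIdx n) ℝ)) ⊆ parabolicSet n) {x : h}
    (hx : x ∈ derivedSeries ℝ h 1) :
    (x : Matrix (PIdx n) (PIdx n) ℝ) ∈ LinearMap.range (translation n) := by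
  have hle : (derivedSeries ℝ h 1 : Submodule ℝ h) ≤
      (LinearMap.range (translation n)).comap (h.incl : h →ₗ[ℝ] Matrix (PIdx n) (PIdx n) ℝ) := by
    rw [coe_derivedSeries_one_eq, Submodule.span_le]
    rintro _ ⟨x, y, rfl⟩
    exact lie_mem_range_translation h hsub x y
  exact hle hx

end Parabolic

open Parabolic

/-- Every solvable subalgebra `h` of the parabolic algebra `p = (ℝ ⊕ so(n)) ⋉ ℝⁿ`
is 2-step solvable: its second derived algebra `h⁽²⁾` vanishes. -/
theorem solvable_parabolic_subalgebra_two_step (n : ℕ)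
    (h : LieSubalgebra ℝ (Matrix (PIdx n) (PIdx n) ℝ))
    (hsub : (h : Set (Matrix (PIdx n) (PIdx n) ℝ)) ⊆ parabolicSet n)
    (hsolv : LieAlgebra.IsSolvable h) :
    LieAlgebra.derivedSeries ℝ h 2 = ⊥ := by
  rw [derivedSeries_def, derivedSeriesOfIdeal_succ, LieSubmodule.lie_eq_bot_iff]
  intro x hx y hy
  obtain ⟨v, hv⟩ := mem_range_translation_of_mem_derivedSeries_one h hsub hx
  obtain ⟨w, hw⟩ := mem_range_translation_of_mem_derivedSeries_one h hsub hy
  exact Subtype.ext (by rw [LieSubalgebra.coe_bracket, ← hv, ← hw, translation_lie_translation]; rfl)
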